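/- arXiv:1608.07468 — 2 statements merged into one kernel-verified Lean document; each statement's English description precedes it below -/
import Mathlib

section
/- For any 3×3 PC matrix A with coefficients in a group G, there exists g = (g_1, g_2, g_3) ∈ G^3 such that the left action L_g(A) is consistent; specifically, taking g_2 = a_{2,1} * a_{1,3} * a_{3,2} (and g_1 arbitrary) makes L_g(A) consistent. Hence every orbit of the left action on PC_3(G) intersects the set of consistent PC matrices. -/
/-- For any 3×3 PC matrix over `G` (upper triangle `a12, a13, a23`), taking
`g2 = a21 * a13 * a32 = a12⁻¹ * a13 * a23⁻¹` (and `g1` arbitrary) makes the left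
action consistent: `g1 * a13 = (g1 * a12) * (g2 * a23)`.  Hence every orbit of the
left action on `PC_3(G)` meets the consistent matrices. -/
theorem left_action_orbit_meets_consistent {G : Type*} [Group G]
    (a12 a13 a23 : G) (g1 : G) :
    (g1 * a13 = (g1 * a12) * ((a12⁻¹ * a13 * a23⁻¹) * a23)) ∧
    (∃ h1 h2 : G, h1 * a13 = (h1 * a12) * (h2 * a23)) := by
  constructor
  · group
  · exact ⟨g1, a12⁻¹ * a13 * a23⁻¹, by group⟩
end

section
/- Let K = (k_{i,j}) be the distance matrix of a nonzero PC matrix over ℝ₊*, i.e. k_{i,j} = |log a_{i,j}|. If N is the number of nonzero off-diagonal coefficients of K, then N is even, and there are exactly 2^{N/2} PC matrices over ℝ₊* whose distance matrix equals K. -/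
/-- Let `k i j = |log (a i j)|` be the distance matrix of a nonzero PC matrix over
`ℝ₊*`. If `N` is the number of nonzero off-diagonal coefficients of `k`, then `N` is
even and there are exactly `2 ^ (N / 2)` PC matrices whose distance matrix is `k`. -/
theorem distance_matrix_count (n : ℕ) (a : Fin n → Fin n → ℝ)
    (hpos : ∀ i j, 0 < a i j)
    (hdiag : ∀ i, a i i = 1)
    (hinv : ∀ i j, a j i = (a i j)⁻¹)
    (hne : ∃ i j, |Real.log (a i j)| ≠ 0) :
    Even (Finset.univ.filter
        (fun p : Fin n × Fin n => p.1 ≠ p.2 ∧ |Real.log (a p.1 p.2)| ≠ 0)).card ∧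
    Set.ncard {b : Fin n → Fin n → ℝ |
        (∀ i j, 0 < b i j) ∧ (∀ i, b i i = 1) ∧ (∀ i j, b j i = (b i j)⁻¹) ∧
        ∀ i j, |Real.log (b i j)| = |Real.log (a i j)|}
      = 2 ^ ((Finset.univ.filter
          (fun p : Fin n × Fin n => p.1 ≠ p.2 ∧ |Real.log (a p.1 p.2)| ≠ 0)).card / 2) := by
  classical
  have hsym : ∀ i j : Fin n, |Real.log (a j i)| = |Real.log (a i j)| := by
    intro i j; rw [hinv, Real.log_inv, abs_neg]
  have hone : ∀ x : ℝ, 0 < x → |Real.log x| = 0 → x = 1 := by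
    intro x hx h
    rcases Real.log_eq_zero.mp (abs_eq_zero.mp h) with h | h | h
    · exact absurd h (ne_of_gt hx)
    · exact h
    · linarith
  have htwo : ∀ x y : ℝ, 0 < x → 0 < y → |Real.log y| = |Real.log x| →
      y = x ∨ y = x⁻¹ := by
    intro x y hx hy h
    rcases abs_eq_abs.mp h with h | h
    · left; rw [← Real.exp_log hy, h, Real.exp_log hx]
    · right
      rw [← Real.exp_log hy, h, ← Real.log_inv, Real.exp_log (by positivity)]
  set T : Finset (Fin n × Fin n) :=
    Finset.univ.filter (fun p => p.1 < p.2 ∧ |Real.log (a p.1 p.2)| ≠ 0) with hT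
  have hFcard : (Finset.univ.filter
      (fun p : Fin n × Fin n => p.1 ≠ p.2 ∧ |Real.log (a p.1 p.2)| ≠ 0)).card
      = 2 * T.card := by
    have hunion : (Finset.univ.filter
        (fun p : Fin n × Fin n => p.1 ≠ p.2 ∧ |Real.log (a p.1 p.2)| ≠ 0))
        = T ∪ T.image Prod.swap := by
      ext p
      simp only [hT, Finset.mem_union, Finset.mem_image, Finset.mem_filter,
        Finset.mem_univ, true_and]
      constructor
      · rintro ⟨hne', hk⟩
        rcases lt_or_gt_of_ne hne' with h | h
        · exact Or.inl ⟨h, hk⟩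
        · exact Or.inr ⟨p.swap, ⟨h, by simpa [hsym] using hk⟩, Prod.swap_swap p⟩
      · rintro (⟨h, hk⟩ | ⟨q, ⟨h, hk⟩, rfl⟩)
        · exact ⟨ne_of_lt h, hk⟩
        · exact ⟨ne_of_gt h, by simpa [hsym] using hk⟩
    have hdisj : Disjoint T (T.image Prod.swap) := by
      rw [Finset.disjoint_left]
      rintro p hp hp'
      simp only [hT, Finset.mem_image, Finset.mem_filter, Finset.mem_univ, true_and] at hp hp'
      obtain ⟨q, ⟨hq, _⟩, rfl⟩ := hp'
      exact absurd hp.1 (not_lt.mpr (le_of_lt hq))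
    rw [hunion, Finset.card_union_of_disjoint hdisj,
      Finset.card_image_of_injective _ Prod.swap_injective]
    ring
  refine ⟨⟨T.card, by rw [hFcard]; ring⟩, ?_⟩
  rw [hFcard, Nat.mul_div_cancel_left _ (by norm_num)]
  -- the bijection
  set Φ : ({p // p ∈ T} → Bool) → (Fin n → Fin n → ℝ) := fun g i j =>
    if h : (i, j) ∈ T then (if g ⟨(i, j), h⟩ then a i j else (a i j)⁻¹)
    else if h' : (j, i) ∈ T then (if g ⟨(j, i), h'⟩ then a i j else (a i j)⁻¹)
    else a i j with hΦ
  have hnotboth : ∀ i j : Fin n, (i, j) ∈ T → (j, i) ∉ T := by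
    intro i j hij hji
    simp only [hT, Finset.mem_filter, Finset.mem_univ, true_and] at hij hji
    exact absurd hij.1 (not_lt.mpr (le_of_lt hji.1))
  have hΦinj : Function.Injective Φ := by
    intro g g' h
    funext p
    obtain ⟨⟨i, j⟩, hp⟩ := p
    have h1 : Φ g i j = Φ g' i j := by rw [h]
    simp only [hΦ, dif_pos hp] at h1
    by_contra hne'
    have hij1 : a i j ≠ 1 := by
      intro h'
      have := (Finset.mem_filter.mp hp).2.2
      rw [h', Real.log_one, abs_zero] at this
      exact this rfl
    have hij2 : a i j ≠ (a i j)⁻¹ := by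
      intro h'
      have : a i j * a i j = 1 := by
        nth_rewrite 2 [h']
        exact mul_inv_cancel₀ (ne_of_gt (hpos i j))
      rcases mul_self_eq_one_iff.mp this with h'' | h''
      · exact hij1 h''
      · linarith [hpos i j]
    cases hg : g ⟨(i, j), hp⟩ <;> cases hg' : g' ⟨(i, j), hp⟩ <;>
      simp [hg, hg'] at h1 hne' <;> first
        | exact hij2 h1.symm
        | exact hij2 h1
  have hrange : {b : Fin n → Fin n → ℝ |
      (∀ i j, 0 < b i j) ∧ (∀ i, b i i = 1) ∧ (∀ i j, b j i = (b i j)⁻¹) ∧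
      ∀ i j, |Real.log (b i j)| = |Real.log (a i j)|} = Set.range Φ := by
    ext b
    simp only [Set.mem_setOf_eq, Set.mem_range]
    constructor
    · rintro ⟨hbpos, hbdiag, hbinv, hbk⟩
      have hTne : ∀ i j : Fin n, (i, j) ∈ T → a i j ≠ (a i j)⁻¹ := by
        intro i j hij hcon
        have hij1 : a i j ≠ 1 := by
          intro h'
          have := (Finset.mem_filter.mp hij).2.2
          rw [h', Real.log_one, abs_zero] at this
          exact this rfl
        have : a i j * a i j = 1 := by
          nth_rewrite 2 [hcon]
          exact mul_inv_cancel₀ (ne_of_gt (hpos i j))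
        rcases mul_self_eq_one_iff.mp this with h'' | h''
        · exact hij1 h''
        · linarith [hpos i j]
      refine ⟨fun p => decide (b p.1.1 p.1.2 = a p.1.1 p.1.2), ?_⟩
      funext i j
      by_cases h : (i, j) ∈ T
      · simp only [hΦ, dif_pos h]
        rcases htwo _ _ (hpos i j) (hbpos i j) (hbk i j) with hb | hb
        · rw [if_pos (by simp [hb])]; exact hb.symm
        · have hne2 : b i j ≠ a i j := fun hh => hTne i j h (hh ▸ hb)
          rw [if_neg (by simp [hne2])]; exact hb.symm
      · by_cases h' : (j, i) ∈ T
        · simp only [hΦ, dif_neg h, dif_pos h']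
          rcases htwo _ _ (hpos j i) (hbpos j i) (hbk j i) with hb | hb
          · have : b i j = a i j := by
              rw [← inv_inv (b i j), ← hbinv, hb, hinv, inv_inv]
            rw [if_pos (by simp [hb])]; exact this.symm
          · have hne2 : b j i ≠ a j i := fun hh => hTne j i h' (hh ▸ hb)
            have : b i j = (a i j)⁻¹ := by
              rw [← inv_inv (b i j), ← hbinv, hb, hinv, inv_inv]
            rw [if_neg (by simp [hne2])]; exact this.symm
        · simp only [hΦ, dif_neg h, dif_neg h']
          by_cases hij : i = j
          · subst hij; rw [hdiag, hbdiag]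
          · have hk0 : |Real.log (a i j)| = 0 := by
              rcases lt_or_gt_of_ne hij with hlt | hlt
              · by_contra hk
                exact h (Finset.mem_filter.mpr ⟨Finset.mem_univ _, hlt, hk⟩)
              · by_contra hk
                exact h' (Finset.mem_filter.mpr ⟨Finset.mem_univ _, hlt,
                  by rw [hsym]; exact hk⟩)
            have hb0 : |Real.log (b i j)| = 0 := by rw [hbk]; exact hk0
            rw [hone _ (hpos i j) hk0, hone _ (hbpos i j) hb0]
    · rintro ⟨g, rfl⟩
      have hΦval : ∀ i j, Φ g i j = a i j ∨ Φ g i j = (a i j)⁻¹ := by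
        intro i j
        simp only [hΦ]
        split_ifs <;> simp
      refine ⟨?_, ?_, ?_, ?_⟩
      · intro i j
        rcases hΦval i j with h | h <;> rw [h]
        · exact hpos i j
        · exact inv_pos.mpr (hpos i j)
      · intro i
        have : ¬ (i, i) ∈ T := by
          simp [hT, Finset.mem_filter]
        simp only [hΦ, dif_neg this, hdiag, inv_one, ite_self]
      · intro i j
        simp only [hΦ]
        by_cases h : (i, j) ∈ T
        · rw [dif_neg (hnotboth i j h), dif_pos h, dif_pos h]
          cases g ⟨(i, j), h⟩ <;> simp [hinv i j, inv_inv]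
        · by_cases h' : (j, i) ∈ T
          · rw [dif_pos h', dif_neg h, dif_pos h']
            cases g ⟨(j, i), h'⟩ <;> simp [hinv i j, inv_inv]
          · rw [dif_neg h, dif_neg h', dif_neg h', dif_neg h, hinv i j]
      · intro i j
        rcases hΦval i j with h | h <;> rw [h]
        rw [Real.log_inv, abs_neg]
  rw [hrange, ← Nat.card_coe_set_eq, Nat.card_range_of_injective hΦinj,
    Nat.card_eq_fintype_card, Fintype.card_fun, Fintype.card_bool, Fintype.card_coe]
end
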